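/- Let n ≥ 1, let ε > 0, and let P be a polynomial path of degree n with a P-root-path set {γ_1, ..., γ_n}. Then there exists a polynomial path P' of degree n such that P'_α has n distinct roots for every α ∈ [0,1], together with a P'-root-path set {γ'_1, ..., γ'_n}, satisfying ‖P_α − P'_α‖ < ε and |γ_j(α) − γ'_j(α)| < ε for all α ∈ [0,1] and all j = 1, ..., n. -/

import Mathlib

/-!
Approximate each root path by a smooth curve `g j` and separate the curves by the shifts
`g j + j • c`. Two shifted curves meet at some time only if `c` lies on the curve
`(g k - g j) / (j - k)`; these finitely many `C¹` curves have Hausdorff dimension at most `1`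
in the plane, so a `c` as small as we like avoids all of them. The new polynomial path is
`∏ j, (X - C (g j α + j • c))`, whose coefficients stay close to those of `P α` because the
coefficients of `∏ j, (X - C (z j))` depend uniformly continuously on `z` near a compact set.
-/

open Polynomial Set

def IsPolyPath (n : ℕ) (P : ℝ → Polynomial ℂ) : Prop :=
  (∀ α ∈ Set.Icc (0 : ℝ) 1, (P α).Monic ∧ (P α).natDegree = n) ∧
  ∀ k : ℕ, ContinuousOn (fun α => (P α).coeff k) (Set.Icc 0 1)

def IsRootPathSet (n : ℕ) (P : ℝ → Polynomial ℂ) (γ : Fin n → ℝ → ℂ) : Prop :=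
  (∀ j, ContinuousOn (γ j) (Set.Icc 0 1)) ∧
  ∀ α ∈ Set.Icc (0 : ℝ) 1, (Finset.univ.val.map fun j => γ j α) = (P α).roots

theorem IsCompact.exists_forall_dist_lt_of_continuousAt {X Y : Type*} [PseudoMetricSpace X]
    [PseudoMetricSpace Y] {s : Set X} (hs : IsCompact s) {f : X → Y}
    (hf : ∀ x ∈ s, ContinuousAt f x) {ε : ℝ} (hε : 0 < ε) :
    ∃ δ > 0, ∀ x ∈ s, ∀ y, dist x y < δ → dist (f x) (f y) < ε :=
  (Metric.mem_uniformity_dist.1 (hs.uniformContinuousAt_of_continuousAt f hf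
    (Metric.dist_mem_uniformity hε))).imp fun _ ⟨hδ, h⟩ => ⟨hδ, fun _ hx _ hxy => h hxy hx⟩

theorem exists_contDiff_norm_sub_lt_of_continuousOn {f : ℝ → ℂ} {a b : ℝ}
    (hf : ContinuousOn f (Icc a b)) {ε : ℝ} (hε : 0 < ε) :
    ∃ g : ℝ → ℂ, ContDiff ℝ 1 g ∧ ∀ x ∈ Icc a b, ‖f x - g x‖ < ε := by
  obtain ⟨p, hp⟩ := exists_polynomial_near_of_continuousOn a b _
    (Complex.continuous_re.comp_continuousOn hf) (ε / 2) (half_pos hε)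
  obtain ⟨q, hq⟩ := exists_polynomial_near_of_continuousOn a b _
    (Complex.continuous_im.comp_continuousOn hf) (ε / 2) (half_pos hε)
  refine ⟨fun x => ⟨p.eval x, q.eval x⟩, ?_, fun x hx => ?_⟩
  · have hpoly (r : ℝ[X]) : ContDiff ℝ 1 fun x : ℝ => r.eval x := by
      simpa only [coe_aeval_eq_eval] using r.contDiff_aeval (𝕜 := ℝ) 1
    exact Complex.equivRealProdCLM.symm.contDiff.comp ((hpoly p).prodMk (hpoly q))
  · calc ‖f x - ⟨p.eval x, q.eval x⟩‖ ≤ |(f x).re - p.eval x| + |(f x).im - q.eval x| :=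
          Complex.norm_le_abs_re_add_abs_im _
      _ < ε / 2 + ε / 2 := by
          rw [abs_sub_comm _ (p.eval x), abs_sub_comm _ (q.eval x)]
          exact add_lt_add (hp x hx) (hq x hx)
      _ = ε := add_halves ε

theorem exists_forall_norm_smul_lt_and_injective_add_smul {ι E : Type*} [Finite ι]
    [NormedAddCommGroup E] [NormedSpace ℝ E] [FiniteDimensional ℝ E]
    (hE : 1 < Module.finrank ℝ E) {g : ι → ℝ → E} (hg : ∀ j, ContDiff ℝ 1 (g j)) {a : ι → ℝ}
    (ha : Function.Injective a) {r : ℝ} (hr : 0 < r) :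
    ∃ c : E, (∀ j, ‖a j • c‖ < r) ∧ ∀ t, Function.Injective fun j => g j t + a j • c := by
  set B : Set E := ⋃ p : ι × ι, range fun t => (a p.1 - a p.2)⁻¹ • (g p.2 t - g p.1 t)
  have hB : dimH B < Module.finrank ℝ E := by
    refine lt_of_le_of_lt ?_ (Nat.one_lt_cast.2 hE)
    rw [dimH_iUnion]
    refine iSup_le fun p => ?_
    have hp : ContDiff ℝ 1 fun t => (a p.1 - a p.2)⁻¹ • (g p.2 t - g p.1 t) :=
      contDiff_const.smul ((hg p.2).sub (hg p.1))
    simpa using hp.dimH_range_le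
  have hU : IsOpen (⋂ j, {c : E | ‖a j • c‖ < r}) :=
    isOpen_iInter_of_finite fun j => isOpen_lt (continuous_const_smul _).norm continuous_const
  obtain ⟨c, hcB, hcU⟩ := (dense_compl_of_dimH_lt_finrank hB).exists_mem_open hU
    ⟨0, mem_iInter.2 fun j => by simpa using hr⟩
  refine ⟨c, by simpa using hcU, fun t j k hjk => ?_⟩
  by_contra hne
  have hsub : g k t - g j t = (a j - a k) • c := by
    rw [sub_smul, sub_eq_sub_iff_add_eq_add, add_comm (a j • c)]
    exact hjk.symm
  refine hcB (mem_iUnion.2 ⟨(j, k), t, ?_⟩)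
  simp only [hsub, smul_smul, inv_mul_cancel₀ (sub_ne_zero.2 (ha.ne hne)), one_smul]

namespace Polynomial

variable {Z R ι : Type*} [TopologicalSpace Z] {s : Set Z}

theorem continuousOn_coeff_prod [CommSemiring R] [TopologicalSpace R] [IsTopologicalSemiring R]
    {f : ι → Z → R[X]} (t : Finset ι) (hf : ∀ i ∈ t, ∀ k, ContinuousOn (fun x => (f i x).coeff k) s)
    (k : ℕ) : ContinuousOn (fun x => (∏ i ∈ t, f i x).coeff k) s := by
  classical
  induction t using Finset.induction_on generalizing k with
  | empty => simpa only [Finset.prod_empty] using continuousOn_const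
  | insert i t hi ih =>
    simp only [Finset.prod_insert hi, coeff_mul]
    exact continuousOn_finsetSum _ fun p _ =>
      (hf i (t.mem_insert_self i) p.1).mul (ih (fun j hj => hf j (Finset.mem_insert_of_mem hj)) p.2)

theorem continuousOn_coeff_prod_X_sub_C [CommRing R] [TopologicalSpace R] [IsTopologicalRing R]
    {z : ι → Z → R} (t : Finset ι) (hz : ∀ i ∈ t, ContinuousOn (z i) s) (k : ℕ) :
    ContinuousOn (fun x => (∏ i ∈ t, (X - C (z i x))).coeff k) s := by
  refine continuousOn_coeff_prod t (fun i hi k => ?_) k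
  simp only [coeff_sub, coeff_X, coeff_C]
  exact continuousOn_const.sub (by split_ifs; exacts [hz i hi, continuousOn_const])

theorem natDegree_prod_X_sub_C_le [CommRing R] (t : Finset ι) (z : ι → R) :
    (∏ i ∈ t, (X - C (z i))).natDegree ≤ t.card :=
  (natDegree_prod_le (s := t) (f := fun i => X - C (z i))).trans <| by
    simpa using Finset.sum_le_card_nsmul t _ 1 fun i _ => natDegree_X_sub_C_le (z i)

theorem roots_prod_X_sub_C_eq_map [CommRing R] [IsDomain R] (t : Finset ι) (z : ι → R) :
    (∏ i ∈ t, (X - C (z i))).roots = t.val.map z := by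
  rw [Finset.prod_eq_multiset_prod, ← roots_multiset_prod_X_sub_C (t.val.map z), Multiset.map_map]
  rfl

theorem card_roots_toFinset_prod_X_sub_C [Fintype ι] [CommRing R] [IsDomain R] [DecidableEq R]
    {z : ι → R} (hz : Function.Injective z) :
    (∏ i, (X - C (z i))).roots.toFinset.card = Fintype.card ι := by
  rw [roots_prod_X_sub_C_eq_map, Multiset.toFinset_card_of_nodup (Finset.univ.nodup.map hz),
    Multiset.card_map, Finset.card_val, Finset.card_univ]

theorem _root_.IsCompact.exists_forall_norm_coeff_prod_X_sub_C_sub_lt [Fintype ι]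
    [NormedCommRing R] {K : Set (ι → R)} (hK : IsCompact K) {ε : ℝ} (hε : 0 < ε) :
    ∃ δ > 0, ∀ z ∈ K, ∀ w, dist z w < δ →
      ∀ k, ‖(∏ i, (X - C (z i))).coeff k - (∏ i, (X - C (w i))).coeff k‖ < ε := by
  set F : (ι → R) → Fin (Fintype.card ι + 1) → R := fun z k => (∏ i, (X - C (z i))).coeff k
  have hF : Continuous F := continuous_pi fun k => continuousOn_univ.1 <|
    continuousOn_coeff_prod_X_sub_C _ (fun i _ => (continuous_apply i).continuousOn) k
  obtain ⟨δ, hδ, hFδ⟩ := hK.exists_forall_dist_lt_of_continuousAt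
    (fun z _ => hF.continuousAt) hε
  refine ⟨δ, hδ, fun z hz w hzw k => ?_⟩
  rcases lt_or_ge (Fintype.card ι) k with hk | hk
  · have hdeg (v : ι → R) : (∏ i, (X - C (v i))).natDegree < k :=
      (natDegree_prod_X_sub_C_le _ v).trans_lt hk
    simpa [coeff_eq_zero_of_natDegree_lt (hdeg z), coeff_eq_zero_of_natDegree_lt (hdeg w)]
  · rw [← dist_eq_norm]
    exact (dist_le_pi_dist (F z) (F w) ⟨k, Nat.lt_succ_of_le hk⟩).trans_lt (hFδ z hz w hzw)

end Polynomial

theorem isPolyPath_prod_X_sub_C {n : ℕ} {γ : Fin n → ℝ → ℂ}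
    (hγ : ∀ j, ContinuousOn (γ j) (Icc 0 1)) :
    IsPolyPath n fun α => ∏ j, (X - C (γ j α)) :=
  ⟨fun _ _ => ⟨monic_prod_of_monic _ _ fun j _ => monic_X_sub_C _, by simp⟩,
    continuousOn_coeff_prod_X_sub_C _ fun j _ => hγ j⟩

theorem isRootPathSet_prod_X_sub_C {n : ℕ} {γ : Fin n → ℝ → ℂ}
    (hγ : ∀ j, ContinuousOn (γ j) (Icc 0 1)) :
    IsRootPathSet n (fun α => ∏ j, (X - C (γ j α))) γ :=
  ⟨hγ, fun _ _ => (roots_prod_X_sub_C_eq_map _ _).symm⟩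

theorem IsRootPathSet.eq_prod_X_sub_C {n : ℕ} {P : ℝ → ℂ[X]} {γ : Fin n → ℝ → ℂ}
    (hP : IsPolyPath n P) (hγ : IsRootPathSet n P γ) {α : ℝ} (hα : α ∈ Icc 0 1) :
    P α = ∏ j, (X - C (γ j α)) := by
  conv_lhs => rw [(IsAlgClosed.splits (P α)).eq_prod_roots_of_monic (hP.1 α hα).1,
    ← hγ.2 α hα, Multiset.map_map]
  rfl

theorem exists_close_polypath_with_distinct_roots_general
    (n : ℕ) (ε : ℝ) (hε : 0 < ε)
    (P : ℝ → Polynomial ℂ) (hP : IsPolyPath n P)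
    (γ : Fin n → ℝ → ℂ) (hγ : IsRootPathSet n P γ) :
    ∃ P' : ℝ → Polynomial ℂ, IsPolyPath n P' ∧
      (∀ α ∈ Set.Icc (0 : ℝ) 1, (P' α).roots.toFinset.card = n) ∧
      ∃ γ' : Fin n → ℝ → ℂ, IsRootPathSet n P' γ' ∧
        (∀ α ∈ Set.Icc (0 : ℝ) 1, ∀ k, ‖(P α).coeff k - (P' α).coeff k‖ < ε) ∧
        (∀ α ∈ Set.Icc (0 : ℝ) 1, ∀ j, ‖γ j α - γ' j α‖ < ε) := by
  obtain ⟨δ, hδ, hcoeff⟩ := (isCompact_Icc.image_of_continuousOn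
    (continuousOn_pi.2 hγ.1)).exists_forall_norm_coeff_prod_X_sub_C_sub_lt hε
  set η := min δ ε
  have hη : 0 < η := lt_min hδ hε
  choose g hg hgγ using fun j => exists_contDiff_norm_sub_lt_of_continuousOn (hγ.1 j) (half_pos hη)
  have hE : 1 < Module.finrank ℝ ℂ := by rw [Complex.finrank_real_complex]; norm_num
  obtain ⟨c, hc, hinj⟩ := exists_forall_norm_smul_lt_and_injective_add_smul hE hg
    (Nat.cast_injective.comp Fin.val_injective : Function.Injective fun j : Fin n => (j : ℝ))
    (half_pos hη)
  set γ' : Fin n → ℝ → ℂ := fun j α => g j α + (j : ℝ) • c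
  have hclose : ∀ α ∈ Icc (0 : ℝ) 1, ∀ j, ‖γ j α - γ' j α‖ < η := fun α hα j =>
    calc ‖γ j α - γ' j α‖ = ‖(γ j α - g j α) - (j : ℝ) • c‖ := by rw [sub_sub]
      _ ≤ ‖γ j α - g j α‖ + ‖(j : ℝ) • c‖ := norm_sub_le _ _
      _ < η / 2 + η / 2 := add_lt_add (hgγ j α hα) (hc j)
      _ = η := add_halves η
  have hγ'cont : ∀ j, ContinuousOn (γ' j) (Icc 0 1) :=
    fun j => ((hg j).continuous.add continuous_const).continuousOn
  refine ⟨fun α => ∏ j, (X - C (γ' j α)), isPolyPath_prod_X_sub_C hγ'cont,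
    fun α _ => (card_roots_toFinset_prod_X_sub_C (hinj α)).trans (Fintype.card_fin n), γ',
    isRootPathSet_prod_X_sub_C hγ'cont, fun α hα k => ?_,
    fun α hα j => (hclose α hα j).trans_le (min_le_right _ _)⟩
  rw [hγ.eq_prod_X_sub_C hP hα]
  refine hcoeff _ ⟨α, hα, rfl⟩ _ ((dist_pi_lt_iff hδ).2 fun j => ?_) k
  rw [dist_eq_norm]
  exact (hclose α hα j).trans_le (min_le_left _ _)

theorem exists_close_polypath_with_distinct_roots
    (n : ℕ) (hn : 1 ≤ n) (ε : ℝ) (hε : 0 < ε)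
    (P : ℝ → Polynomial ℂ) (hP : IsPolyPath n P)
    (γ : Fin n → ℝ → ℂ) (hγ : IsRootPathSet n P γ) :
    ∃ P' : ℝ → Polynomial ℂ, IsPolyPath n P' ∧
      (∀ α ∈ Set.Icc (0 : ℝ) 1, (P' α).roots.toFinset.card = n) ∧
      ∃ γ' : Fin n → ℝ → ℂ, IsRootPathSet n P' γ' ∧
        (∀ α ∈ Set.Icc (0 : ℝ) 1, ∀ k, ‖(P α).coeff k - (P' α).coeff k‖ < ε) ∧
        (∀ α ∈ Set.Icc (0 : ℝ) 1, ∀ j, ‖γ j α - γ' j α‖ < ε) :=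
  exists_close_polypath_with_distinct_roots_general n ε hε P hP γ hγ
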